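/- arXiv:1505.01259 — 4 statements merged into one kernel-verified Lean document; each statement's English description precedes it below -/
import Mathlib

section
/- If U ⊆ V_{n,m} and the induced subgraph G[U] of the Johnson graph J_{n,m} is connected, then |⋃U| ≤ m - 1 + |U|. -/
/-- `Vnm n m` is the collection of all `m`-element subsets of `{0,...,n-1}`. -/
def Vnm (n m : ℕ) : Set (Finset ℕ) := {b | b ⊆ Finset.range n ∧ b.card = m}

/-- The ζ-operator: unions of pairs of members of `U` intersecting in `m - 1` elements. -/
def zeta (m : ℕ) (U : Set (Finset ℕ)) : Set (Finset ℕ) :=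
  {x | ∃ c ∈ U, ∃ d ∈ U, (c ∩ d).card = m - 1 ∧ x = c ∪ d}

/-- Iterated ζ-operator: `ζ^0(U) = U`, `ζ^{v+1}(U) = ζ(ζ^v(U))`
(the level parameter increases by one at each step since `ζ^v(U) ⊆ V_{n,m+v}`). -/
def zetaIter (m : ℕ) : ℕ → Set (Finset ℕ) → Set (Finset ℕ)
  | 0, U => U
  | v + 1, U => zeta (m + v) (zetaIter m v U)

/-- The union `⋃ U` of all members of a family of finite sets. -/
def unionAll (U : Set (Finset ℕ)) : Set ℕ := ⋃ b ∈ U, (b : Set ℕ)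

/-- The induced subgraph `G[U]` of the Johnson graph `J_{n,m}`:
vertices are the members of `U`, two of them adjacent iff distinct with
intersection of cardinality `m - 1`. -/
def inducedGraph (m : ℕ) (U : Set (Finset ℕ)) : SimpleGraph U where
  Adj x y := (x : Finset ℕ) ≠ (y : Finset ℕ) ∧ ((x : Finset ℕ) ∩ (y : Finset ℕ)).card = m - 1
  symm := ⟨fun x y ⟨h1, h2⟩ => ⟨h1.symm, by rwa [Finset.inter_comm]⟩⟩
  loopless := ⟨fun x ⟨h1, _⟩ => h1 rfl⟩

/-- The connected components of `G[U]`, viewed as subsets of `U`. -/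
def componentSets (m : ℕ) (U : Set (Finset ℕ)) : Set (Set (Finset ℕ)) :=
  {Z | ∃ C : (inducedGraph m U).ConnectedComponent,
    Z = Subtype.val '' {x : U | (inducedGraph m U).connectedComponentMk x = C}}


/-!
Grow a connected set of vertices of `G[U]` from a single vertex, each time adding a neighbour of
the current set. In the Johnson graph two adjacent `m`-sets differ in exactly one element, so every
such step enlarges the union by at most one element; after `|U| - 1` steps all of `U` is reached.
-/

open Finset

section

variable {V α : Type*} [DecidableEq V] [DecidableEq α]

theorem card_biUnion_insert_le {f : V → Finset α} {d : ℕ} {S : Finset V} {s x : V}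
    (hs : s ∈ S) (hsx : #(f x \ f s) ≤ d) :
    #((insert x S).biUnion f) ≤ #(S.biUnion f) + d := by
  have hfs : f s ⊆ S.biUnion f := subset_biUnion_of_mem f hs
  calc #((insert x S).biUnion f)
      = #(f x \ S.biUnion f) + #(S.biUnion f) := by
        rw [biUnion_insert, card_sdiff_add_card]
    _ ≤ #(f x \ f s) + #(S.biUnion f) := by
        gcongr
    _ ≤ #(S.biUnion f) + d := by omega

theorem card_sdiff_le_one_of_card_inter {x y : Finset α} {m : ℕ} (hy : #y = m)
    (hxy : #(x ∩ y) = m - 1) : #(y \ x) ≤ 1 := by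
  rw [card_sdiff, hy, hxy]
  omega

end

namespace SimpleGraph

variable {V α : Type*} {G : SimpleGraph V} [DecidableEq V] [DecidableEq α] [Fintype V]

theorem Connected.exists_card_biUnion_le (hG : G.Connected) {f : V → Finset α} {d : ℕ}
    (hf : ∀ u v, G.Adj u v → #(f v \ f u) ≤ d) (v : V) :
    ∀ k < Fintype.card V, ∃ S : Finset V, v ∈ S ∧ #S = k + 1 ∧ #(S.biUnion f) ≤ #(f v) + d * k
  | 0, _ => ⟨{v}, mem_singleton_self v, rfl, by simp⟩
  | k + 1, hk => by
    obtain ⟨S, hvS, hcard, hunion⟩ := hG.exists_card_biUnion_le hf v k (by omega)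
    obtain ⟨b, hbS⟩ : ∃ b, b ∉ S := by
      by_contra! hS
      have : #S = Fintype.card V := by rw [eq_univ_of_forall hS, card_univ]
      omega
    obtain ⟨e, -, heS, heS'⟩ := (hG.preconnected v b).some.exists_boundary_dart (↑S) hvS hbS
    refine ⟨insert e.snd S, mem_insert_of_mem hvS, by rw [card_insert_of_notMem heS']; omega, ?_⟩
    have := card_biUnion_insert_le heS (hf _ _ e.adj)
    rw [Nat.mul_succ]
    omega

theorem Connected.card_biUnion_le (hG : G.Connected) {f : V → Finset α} {d : ℕ}
    (hf : ∀ u v, G.Adj u v → #(f v \ f u) ≤ d) (v : V) :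
    #(univ.biUnion f) ≤ #(f v) + d * (Fintype.card V - 1) := by
  have hpos : 0 < Fintype.card V := Fintype.card_pos_iff.mpr ⟨v⟩
  obtain ⟨S, -, hcard, hunion⟩ := hG.exists_card_biUnion_le hf v _ (Nat.sub_lt hpos one_pos)
  rwa [eq_univ_of_card S (by omega)] at hunion

end SimpleGraph

theorem Vnm.finite (n m : ℕ) : (Vnm n m).Finite :=
  (range n).powerset.finite_toSet.subset fun _ hb => mem_powerset.mpr hb.1

theorem unionAll_eq_coe_biUnion (U : Set (Finset ℕ)) [Fintype U] :
    unionAll U = ↑(univ.biUnion (Subtype.val : U → Finset ℕ)) := by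
  ext a
  simp [unionAll]

theorem stmt3 (n m : ℕ) (U : Set (Finset ℕ)) (hU : U ⊆ Vnm n m)
    (hconn : (inducedGraph m U).Connected) :
    (unionAll U).ncard ≤ m - 1 + U.ncard := by
  have hfin : U.Finite := (Vnm.finite n m).subset hU
  have := hfin.fintype
  obtain ⟨a⟩ := hconn.nonempty
  have hunion := hconn.card_biUnion_le (f := Subtype.val) (d := 1)
    (fun x y hxy => card_sdiff_le_one_of_card_inter (hU y.2).2 hxy.2) a
  rw [← Set.ncard_coe_finset, ← unionAll_eq_coe_biUnion, (hU a.2).2,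
    ← Nat.card_eq_fintype_card, Nat.card_coe_set_eq] at hunion
  have hpos : 0 < U.ncard := (Set.ncard_pos hfin).mpr ⟨_, a.2⟩
  omega
end

section
/- If U ⊆ V_{n,m} with |U| ≤ n - m and the induced subgraph G[U] of the Johnson graph J_{n,m} is connected, then ⋃U ≠ {1,...,n}. -/
namespace SimpleGraph

variable {V : Type*} {G : SimpleGraph V}

theorem Connected.exists_adj_dist_lt (hG : G.Connected) {r v : V} (hv : v ≠ r) :
    ∃ c, G.Adj c v ∧ G.dist r c < G.dist r v := by
  obtain ⟨p, hp⟩ := hG.exists_walk_length_eq_dist r v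
  obtain ⟨c, hadj, q, hq⟩ := Walk.exists_eq_cons_of_ne hv p.reverse
  have hlen : q.length + 1 = G.dist r v := by
    rw [← hp, ← Walk.length_reverse p, hq, Walk.length_cons]
  exact ⟨c, hadj.symm, (dist_le q.reverse).trans_lt (by rw [Walk.length_reverse]; omega)⟩

theorem Connected.card_biUnion_sdiff_lt [Fintype V] {α : Type*} [DecidableEq α]
    (hG : G.Connected) (f : V → Finset α) (hf : ∀ u v, G.Adj u v → (f v \ f u).card ≤ 1)
    (r : V) : ((Finset.univ.biUnion f) \ f r).card < Fintype.card V := by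
  classical
  have : Nonempty V := ⟨r⟩
  set D := (Finset.univ.biUnion f) \ f r
  have hclosest : ∀ x ∈ D, ∃ v, x ∈ f v ∧ ∀ w, x ∈ f w → G.dist r v ≤ G.dist r w := by
    intro x hx
    obtain ⟨v, -, hxv⟩ := Finset.mem_biUnion.mp (Finset.mem_sdiff.mp hx).1
    obtain ⟨v, hv, hmin⟩ := Finset.exists_min_image (Finset.univ.filter (x ∈ f ·))
      (G.dist r) ⟨v, by simpa using hxv⟩
    exact ⟨v, by simpa using hv, fun w hw => hmin w (by simpa using hw)⟩
  choose! g hxg hmin using hclosest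
  have hg_ne : ∀ x ∈ D, g x ≠ r := fun x hx h =>
    (Finset.mem_sdiff.mp hx).2 (h ▸ hxg x hx)
  have hg_inj : Set.InjOn g ↑D := by
    intro x hx y hy hxy
    obtain ⟨c, hadj, hc⟩ := hG.exists_adj_dist_lt (hg_ne x hx)
    have hmem_sdiff : ∀ z ∈ D, g z = g x → z ∈ f (g x) \ f c := fun z hz hzx =>
      Finset.mem_sdiff.mpr ⟨hzx ▸ hxg z hz, fun hzc => (hmin z hz c hzc).not_gt (hzx ▸ hc)⟩
    exact Finset.card_le_one.mp (hf c _ hadj) x (hmem_sdiff x hx rfl) y (hmem_sdiff y hy hxy.symm)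
  calc D.card ≤ (Finset.univ.erase r).card :=
        Finset.card_le_card_of_injOn g (fun x hx => by simpa using hg_ne x hx) hg_inj
    _ < Fintype.card V := Finset.card_erase_lt_of_mem (Finset.mem_univ r)

end SimpleGraph

theorem card_sdiff_le_one_of_inducedGraph_adj {m : ℕ} {U : Set (Finset ℕ)}
    (hU : ∀ b ∈ U, b.card = m) {x y : U} (h : (inducedGraph m U).Adj x y) :
    ((y : Finset ℕ) \ x).card ≤ 1 := by
  rw [Finset.card_sdiff, h.2, hU _ y.2]
  omega

theorem stmt4 (n m : ℕ) (U : Set (Finset ℕ)) (hU : U ⊆ Vnm n m)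
    (hcard : U.ncard ≤ n - m) (hconn : (inducedGraph m U).Connected) :
    unionAll U ≠ ↑(Finset.range n) := by
  intro hcover
  have hfin : U.Finite := ((Finset.range n).powerset.finite_toSet).subset
    fun b hb => Finset.mem_powerset.mpr (hU hb).1
  have := hfin.fintype
  obtain ⟨b₀⟩ := hconn.nonempty
  have hunion : Finset.univ.biUnion (Subtype.val : U → Finset ℕ) = Finset.range n := by
    apply Finset.coe_injective
    rw [← hcover, unionAll, Finset.coe_biUnion]
    simp
  have hcount := hconn.card_biUnion_sdiff_lt Subtype.val
    (fun _ _ => card_sdiff_le_one_of_inducedGraph_adj fun b hb => (hU hb).2) b₀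
  rw [hunion, Finset.card_sdiff_of_subset (hU b₀.2).1, Finset.card_range, (hU b₀.2).2,
    ← Nat.card_eq_fintype_card, Nat.card_coe_set_eq] at hcount
  omega
end

section
/- Let U ⊆ V_{n,m} with |U| > 1 such that the induced subgraph G[U] of the Johnson graph J_{n,m} is connected. Then the induced subgraph G[ζ(U)] of J_{n,m+1} is connected. -/
/-!
Every member of `ζ(U)` is `c ∪ d` for an edge `c ~ d` of `G[U]`, and two `(m+1)`-sets that
contain a common `m`-set are equal or adjacent in `J_{n,m+1}`. Hence all members of `ζ(U)`
containing a fixed `u ∈ U` are mutually reachable, and along an edge `u ~ v` of `G[U]` the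
set `u ∪ v` links the members above `u` to those above `v`; connectivity of `G[U]` then
propagates this to all of `ζ(U)`, which is nonempty because `G[U]` has an edge.
-/

theorem Finset.card_inter_eq_of_common_subset {α : Type*} [DecidableEq α] {x y d : Finset α}
    {k : ℕ} (hx : x.card = k + 1) (hy : y.card = k + 1) (hd : d.card = k)
    (hdx : d ⊆ x) (hdy : d ⊆ y) (hxy : x ≠ y) : (x ∩ y).card = k := by
  have hlower : k ≤ (x ∩ y).card := hd ▸ Finset.card_le_card (Finset.subset_inter hdx hdy)
  have hupper : (x ∩ y).card ≤ k + 1 := hx ▸ Finset.card_le_card Finset.inter_subset_left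
  have hne : (x ∩ y).card ≠ k + 1 := fun h => hxy <|
    (Finset.eq_of_subset_of_card_le Finset.inter_subset_left (by omega)).symm.trans
      (Finset.eq_of_subset_of_card_le Finset.inter_subset_right (by omega))
  omega

section zeta

variable {n m : ℕ} {U : Set (Finset ℕ)}

lemma union_mem_zeta_of_adj {u v : U} (huv : (inducedGraph m U).Adj u v) :
    (u : Finset ℕ) ∪ v ∈ zeta m U :=
  ⟨u, u.2, v, v.2, huv.2, rfl⟩

lemma card_of_mem_zeta (hm : 1 ≤ m) (hU : U ⊆ Vnm n m) {x : Finset ℕ} (hx : x ∈ zeta m U) :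
    x.card = m + 1 := by
  obtain ⟨c, hc, d, hd, hcd, rfl⟩ := hx
  have := Finset.card_union_add_card_inter c d
  have := (hU hc).2
  have := (hU hd).2
  omega

lemma reachable_zeta_of_common_subset (hm : 1 ≤ m) (hU : U ⊆ Vnm n m) {u : Finset ℕ}
    (hu : u ∈ U) {x y : zeta m U} (hux : u ⊆ x) (huy : u ⊆ y) :
    (inducedGraph (m + 1) (zeta m U)).Reachable x y := by
  by_cases hxy : x = y
  · exact hxy ▸ .refl x
  have hxy' : (x : Finset ℕ) ≠ y := Subtype.coe_ne_coe.mpr hxy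
  exact SimpleGraph.Adj.reachable ⟨hxy', Finset.card_inter_eq_of_common_subset
    (card_of_mem_zeta hm hU x.2) (card_of_mem_zeta hm hU y.2) (hU hu).2 hux huy hxy'⟩

lemma reachable_zeta_of_walk (hm : 1 ≤ m) (hU : U ⊆ Vnm n m) {u v : U}
    (p : (inducedGraph m U).Walk u v) {x y : zeta m U} (hux : (u : Finset ℕ) ⊆ x)
    (hvy : (v : Finset ℕ) ⊆ y) : (inducedGraph (m + 1) (zeta m U)).Reachable x y := by
  induction p generalizing x with
  | nil => exact reachable_zeta_of_common_subset hm hU (Subtype.coe_prop _) hux hvy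
  | @cons u w v huw _ ih =>
    let z : zeta m U := ⟨_, union_mem_zeta_of_adj huw⟩
    exact (reachable_zeta_of_common_subset hm hU u.2 hux (y := z) Finset.subset_union_left).trans
      (ih (x := z) Finset.subset_union_right hvy)

end zeta

theorem stmt7 (n m : ℕ) (hm : 1 ≤ m) (U : Set (Finset ℕ)) (hU : U ⊆ Vnm n m)
    (hcard : 1 < U.ncard) (hconn : (inducedGraph m U).Connected) :
    (inducedGraph (m + 1) (zeta m U)).Connected := by
  have : Nontrivial U := (Set.one_lt_ncard_iff_nontrivial_and_finite.mp hcard).1.coe_sort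
  obtain ⟨v, hv⟩ := hconn.preconnected.exists_adj_of_nontrivial hconn.nonempty.some
  refine (SimpleGraph.connected_iff _).mpr ⟨fun x y => ?_, ⟨⟨_, union_mem_zeta_of_adj hv⟩⟩⟩
  obtain ⟨c, hc, _, _, _, hx⟩ := x.2
  obtain ⟨e, he, _, _, _, hy⟩ := y.2
  obtain ⟨p⟩ := hconn.preconnected ⟨c, hc⟩ ⟨e, he⟩
  exact reachable_zeta_of_walk hm hU p (hx ▸ Finset.subset_union_left)
    (hy ▸ Finset.subset_union_left)
end

section
/- For every connected component V of the induced subgraph G[ζ(U)] of J_{n,m+1}, there exists a set 𝒪 of connected components of G[U] such that V = ζ(⋃𝒪) = ⋃_{Z ∈ 𝒪} ζ(Z). Moreover, if V and V′ are distinct connected components of G[ζ(U)] with corresponding sets 𝒪 and 𝒪′, then 𝒪 ∩ 𝒪′ = ∅. -/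
/-!
Two members `c ∪ d` and `c' ∪ d'` of `ζ(U)` that contain a common member of `U` are equal or
adjacent in `J_{n,m+1}`, since they are `(m+1)`-sets sharing at least `m` points. Following a path
`c = c₀, c₁, …, c_k = c'` of `G[U]` through the intermediate members `cᵢ ∪ cᵢ₊₁ ∈ ζ(U)` therefore
shows that `ζ(Z)` lies inside a single component of `G[ζ(U)]` for every component `Z` of `G[U]`.
Conversely each `c ∪ d ∈ ζ(U)` lies in `ζ(Z)` for the component `Z` of `c`, which also contains
`d`. So the components `V` of `G[ζ(U)]` are exactly the unions of the `ζ(Z)` for the components `Z`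
with `ζ(Z)` meeting `V`, and a component `Z` is used by only one `V`.
-/

open SimpleGraph

lemma SimpleGraph.ConnectedComponent.mem_supp_of_reachable {V : Type*} {G : SimpleGraph V}
    {C : G.ConnectedComponent} {u v : V} (hu : u ∈ C.supp) (huv : G.Reachable u v) :
    v ∈ C.supp :=
  (ConnectedComponent.sound huv).symm.trans hu

section Zeta

variable {m : ℕ} {U : Set (Finset ℕ)}

lemma zeta_mono {Z : Set (Finset ℕ)} (hZ : Z ⊆ U) : zeta m Z ⊆ zeta m U := by
  rintro x ⟨c, hc, d, hd, hcd, rfl⟩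
  exact ⟨c, hZ hc, d, hZ hd, hcd, rfl⟩

-- Phrased so as to remain true at `m = 0`, where `m - 1` truncates.
lemma card_add_of_mem_zeta (hU : ∀ c ∈ U, c.card = m) {x : Finset ℕ} (hx : x ∈ zeta m U) :
    x.card + (m - 1) = 2 * m := by
  obtain ⟨c, hc, d, hd, hcd, rfl⟩ := hx
  have := Finset.card_union_add_card_inter c d
  rw [hU c hc, hU d hd] at this
  omega

lemma inducedGraph_reachable_of_card_inter {c d : U}
    (hcd : ((c : Finset ℕ) ∩ d).card = m - 1) : (inducedGraph m U).Reachable c d := by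
  by_cases h : c = d
  · exact h ▸ Reachable.refl c
  · exact Adj.reachable ⟨fun h' => h (Subtype.ext h'), hcd⟩

lemma inducedGraph_zeta_reachable_of_subset (hU : ∀ c ∈ U, c.card = m) (a b : zeta m U)
    {c : Finset ℕ} (hc : c ∈ U) (hca : c ⊆ a) (hcb : c ⊆ b) :
    (inducedGraph (m + 1) (zeta m U)).Reachable a b := by
  by_cases hab : a = b
  · exact hab ▸ Reachable.refl a
  refine Adj.reachable ⟨fun h => hab (Subtype.ext h), ?_⟩
  have ha := card_add_of_mem_zeta hU a.2
  have hb := card_add_of_mem_zeta hU b.2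
  have hle : m ≤ ((a : Finset ℕ) ∩ b).card :=
    (hU c hc).ge.trans (Finset.card_le_card (Finset.subset_inter hca hcb))
  have hlt : ((a : Finset ℕ) ∩ b).card < (a : Finset ℕ).card := by
    refine Finset.card_lt_card ⟨Finset.inter_subset_left, fun hsub => hab (Subtype.ext ?_)⟩
    exact Finset.eq_of_subset_of_card_le (hsub.trans Finset.inter_subset_right)
      (by omega)
  omega

lemma inducedGraph_zeta_reachable_of_walk (hU : ∀ c ∈ U, c.card = m) {c d : U}
    (p : (inducedGraph m U).Walk c d) (a b : zeta m U) (hca : (c : Finset ℕ) ⊆ a)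
    (hdb : (d : Finset ℕ) ⊆ b) : (inducedGraph (m + 1) (zeta m U)).Reachable a b := by
  induction p generalizing a with
  | nil => exact inducedGraph_zeta_reachable_of_subset hU a b (Subtype.prop _) hca hdb
  | @cons u v _ huv _ ih =>
    let uv : zeta m U := ⟨u ∪ v, u, u.2, v, v.2, huv.2, rfl⟩
    exact (inducedGraph_zeta_reachable_of_subset hU a uv u.2 hca Finset.subset_union_left).trans
      (ih uv Finset.subset_union_right hdb)

end Zeta

section Components

variable {m : ℕ} {U : Set (Finset ℕ)}

lemma subset_of_mem_componentSets {Z : Set (Finset ℕ)} (hZ : Z ∈ componentSets m U) : Z ⊆ U := by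
  obtain ⟨C, rfl⟩ := hZ
  exact Subtype.coe_image_subset U _

lemma zeta_sUnion_of_subset_componentSets {F : Set (Set (Finset ℕ))}
    (hF : F ⊆ componentSets m U) : zeta m (⋃₀ F) = ⋃ Z ∈ F, zeta m Z := by
  refine subset_antisymm ?_
    (Set.iUnion₂_subset fun Z hZ => zeta_mono (Set.subset_sUnion_of_mem hZ))
  rintro x ⟨c, ⟨Z, hZ, hcZ⟩, d, ⟨_, hZ', hdZ'⟩, hcd, rfl⟩
  obtain ⟨C, rfl⟩ := hF hZ
  obtain ⟨c, hc, rfl⟩ := hcZ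
  have hdU : d ∈ U := subset_of_mem_componentSets (hF hZ') hdZ'
  have hdC : (⟨d, hdU⟩ : U) ∈ C.supp :=
    ConnectedComponent.mem_supp_of_reachable hc (inducedGraph_reachable_of_card_inter hcd)
  exact Set.mem_biUnion hZ ⟨c, ⟨c, hc, rfl⟩, d, ⟨_, hdC, rfl⟩, hcd, rfl⟩

lemma exists_mem_componentSets_mem_zeta {x : Finset ℕ} (hx : x ∈ zeta m U) :
    ∃ Z ∈ componentSets m U, x ∈ zeta m Z := by
  obtain ⟨c, hc, d, hd, hcd, rfl⟩ := hx
  let C := (inducedGraph m U).connectedComponentMk ⟨c, hc⟩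
  have hdC : (⟨d, hd⟩ : U) ∈ C.supp :=
    ConnectedComponent.mem_supp_of_reachable ConnectedComponent.connectedComponentMk_mem
      (inducedGraph_reachable_of_card_inter hcd)
  exact ⟨_, ⟨C, rfl⟩, c, ⟨_, rfl, rfl⟩, d, ⟨_, hdC, rfl⟩, hcd, rfl⟩

lemma inducedGraph_zeta_reachable_of_mem_zeta (hU : ∀ c ∈ U, c.card = m)
    {Z : Set (Finset ℕ)} (hZ : Z ∈ componentSets m U) (a b : zeta m U)
    (ha : (a : Finset ℕ) ∈ zeta m Z) (hb : (b : Finset ℕ) ∈ zeta m Z) :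
    (inducedGraph (m + 1) (zeta m U)).Reachable a b := by
  obtain ⟨C, rfl⟩ := hZ
  obtain ⟨_, ⟨c, hc, rfl⟩, _, _, _, hac⟩ := ha
  obtain ⟨_, ⟨c', hc', rfl⟩, _, _, _, hbc'⟩ := hb
  obtain ⟨p⟩ := C.reachable_of_mem_supp hc hc'
  exact inducedGraph_zeta_reachable_of_walk hU p a b (hac ▸ Finset.subset_union_left)
    (hbc' ▸ Finset.subset_union_left)

lemma zeta_subset_of_inter_nonempty (hU : ∀ c ∈ U, c.card = m) {Z V : Set (Finset ℕ)}
    (hZ : Z ∈ componentSets m U) (hV : V ∈ componentSets (m + 1) (zeta m U))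
    (hZV : (zeta m Z ∩ V).Nonempty) : zeta m Z ⊆ V := by
  obtain ⟨C, rfl⟩ := hV
  obtain ⟨-, hx₀Z, a₀, ha₀, rfl⟩ := hZV
  intro x hxZ
  let a : zeta m U := ⟨x, zeta_mono (subset_of_mem_componentSets hZ) hxZ⟩
  exact ⟨a, ConnectedComponent.mem_supp_of_reachable ha₀
    (inducedGraph_zeta_reachable_of_mem_zeta hU hZ a₀ a hx₀Z hxZ), rfl⟩

end Components

/-- The set `𝒪` attached to a component `V` of `G[ζ(U)]`. -/
def componentsBelow (m : ℕ) (U V : Set (Finset ℕ)) : Set (Set (Finset ℕ)) :=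
  {Z | Z ∈ componentSets m U ∧ (zeta m Z ∩ V).Nonempty}

section ComponentsBelow

variable {m : ℕ} {U V V' : Set (Finset ℕ)}

lemma componentsBelow_subset : componentsBelow m U V ⊆ componentSets m U := fun _ hZ => hZ.1

lemma eq_biUnion_zeta_componentsBelow (hU : ∀ c ∈ U, c.card = m)
    (hV : V ∈ componentSets (m + 1) (zeta m U)) : V = ⋃ Z ∈ componentsBelow m U V, zeta m Z := by
  refine subset_antisymm (fun x hxV => ?_)
    (Set.iUnion₂_subset fun Z hZ => zeta_subset_of_inter_nonempty hU hZ.1 hV hZ.2)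
  obtain ⟨Z, hZ, hxZ⟩ :=
    exists_mem_componentSets_mem_zeta (subset_of_mem_componentSets hV hxV)
  exact Set.mem_biUnion ⟨hZ, x, hxZ, hxV⟩ hxZ

lemma componentsBelow_inter_eq_empty (hU : ∀ c ∈ U, c.card = m)
    (hV : V ∈ componentSets (m + 1) (zeta m U)) (hV' : V' ∈ componentSets (m + 1) (zeta m U))
    (hne : V ≠ V') : componentsBelow m U V ∩ componentsBelow m U V' = ∅ := by
  refine Set.eq_empty_of_forall_notMem fun Z ⟨⟨hZ, x, hxZ, hxV⟩, hZV'⟩ => hne ?_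
  have hxV' := zeta_subset_of_inter_nonempty hU hZ hV' hZV'.2 hxZ
  obtain ⟨C, rfl⟩ := hV
  obtain ⟨C', rfl⟩ := hV'
  obtain ⟨a, ha, rfl⟩ := hxV
  rw [Subtype.val_injective.mem_set_image] at hxV'
  rw [ConnectedComponent.eq_of_common_vertex ha hxV']

end ComponentsBelow

theorem stmt9_general (n m : ℕ) (U : Set (Finset ℕ)) (hU : U ⊆ Vnm n m) :
    ∃ f : Set (Finset ℕ) → Set (Set (Finset ℕ)),
      (∀ V ∈ componentSets (m + 1) (zeta m U),
        f V ⊆ componentSets m U ∧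
        V = zeta m (⋃₀ f V) ∧
        V = ⋃ Z ∈ f V, zeta m Z) ∧
      (∀ V ∈ componentSets (m + 1) (zeta m U),
       ∀ V' ∈ componentSets (m + 1) (zeta m U),
        V ≠ V' → f V ∩ f V' = ∅) := by
  have hcard : ∀ c ∈ U, c.card = m := fun c hc => (hU hc).2
  refine ⟨componentsBelow m U, fun V hV => ?_,
    fun V hV V' hV' => componentsBelow_inter_eq_empty hcard hV hV'⟩
  have hunion := eq_biUnion_zeta_componentsBelow hcard hV
  refine ⟨componentsBelow_subset, ?_, hunion⟩
  rwa [zeta_sUnion_of_subset_componentSets componentsBelow_subset]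

theorem stmt9 (n m : ℕ) (hm : 1 ≤ m) (U : Set (Finset ℕ)) (hU : U ⊆ Vnm n m) :
    ∃ f : Set (Finset ℕ) → Set (Set (Finset ℕ)),
      (∀ V ∈ componentSets (m + 1) (zeta m U),
        f V ⊆ componentSets m U ∧
        V = zeta m (⋃₀ f V) ∧
        V = ⋃ Z ∈ f V, zeta m Z) ∧
      (∀ V ∈ componentSets (m + 1) (zeta m U),
       ∀ V' ∈ componentSets (m + 1) (zeta m U),
        V ≠ V' → f V ∩ f V' = ∅) :=
  stmt9_general n m U hU
end
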